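/- arXiv:1804.10411 — 2 statements merged into one kernel-verified Lean document; each statement's English description precedes it below -/
import Mathlib

section
/- Consider S > 1 agents with pairwise distinct positive bids c : Fin S → ℝ running the CBAA-M algorithm over a fully connected communication graph. The shared state after iteration κ is a pair of vectors (v^κ, w^κ) of length S, initialized as v^0 = w^0 = 0. At iteration κ, each agent i whose index does not yet appear in v^{κ-1} proposes itself at the least position j such that c i > w^{κ-1}_j; then, for every position j, w^κ_j is set to the maximum of w^{κ-1}_j and all bids c i proposed at position j, and v^κ_j is set to the index of the corresponding maximizing agent (unchanged if no proposal exceeds w^{κ-1}_j). Then after exactly S iterations the algorithm converges: w^S lists the bids c in strictly decreasing order (w^S_j is the j-th largest bid) and v^S lists the corresponding agent indices (v^S_j is the index of the agent with the j-th largest bid). -/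
/-!
Sort the agents by decreasing bid with a permutation `σ`. By induction on `κ ≤ S`, the state
after `κ` iterations lists `σ 0, …, σ (κ - 1)` with their bids in the first `κ` positions and is
empty after them. In such a state every unlisted agent has a bid below all listed ones and above
`0`, so all of them propose at position `κ` and nowhere else; the highest of them, `σ κ`, wins it.
-/

open Finset

/-- The set of agents proposing themselves at position `j` in one iteration of
CBAA-M: agents `i` whose index does not yet appear in the list `v`, and for
which `j` is the least position whose current winning bid `w j` is beaten by
the bid `c i`. -/
noncomputable def cbaamProposers {S : ℕ} (c : Fin S → ℝ)
    (v : Fin S → Option (Fin S)) (w : Fin S → ℝ) (j : Fin S) : Finset (Fin S) :=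
  letI := Classical.dec
  Finset.univ.filter fun i =>
    (∀ l, v l ≠ some i) ∧ w j < c i ∧ ∀ l, l < j → ¬ w l < c i

/-- One iteration of CBAA-M over a fully connected graph (so all agents share
the same state): at every position `j`, the new winning bid is the maximum of
the old one and the bids proposed at `j`, and the new index entry is the index
of the corresponding maximizing agent (unchanged if there is no proposal at
`j`, every proposal at `j` exceeding `w j` by construction). -/
noncomputable def cbaamStep {S : ℕ} (c : Fin S → ℝ)
    (s : (Fin S → Option (Fin S)) × (Fin S → ℝ)) :
    (Fin S → Option (Fin S)) × (Fin S → ℝ) :=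
  ( fun j =>
      if h : (cbaamProposers c s.1 s.2 j).Nonempty then
        some (Classical.choose ((cbaamProposers c s.1 s.2 j).exists_max_image c h))
      else s.1 j,
    fun j => (cbaamProposers c s.1 s.2 j).fold max (s.2 j) c )

/-- The shared CBAA-M state `(v^κ, w^κ)` after `κ` iterations, initialized as
`v^0 = w^0 = 0` (no index assigned, all bids zero). -/
noncomputable def cbaam {S : ℕ} (c : Fin S → ℝ) (κ : ℕ) :
    (Fin S → Option (Fin S)) × (Fin S → ℝ) :=
  (cbaamStep c)^[κ] (fun _ => none, fun _ => 0)

theorem Function.Injective.exists_perm_strictAnti_comp {S : ℕ} {α : Type*} [LinearOrder α]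
    {c : Fin S → α} (hc : Function.Injective c) :
    ∃ σ : Equiv.Perm (Fin S), StrictAnti (c ∘ σ) := by
  have hmono : StrictMono (c ∘ Tuple.sort c) :=
    (Tuple.monotone_sort c).strictMono_of_injective (hc.comp (Tuple.sort c).injective)
  exact ⟨Fin.revPerm.trans (Tuple.sort c), fun a b hab => hmono (Fin.rev_lt_rev.mpr hab)⟩

theorem Finset.choose_exists_max_image_eq {β α : Type*} [LinearOrder α] {s : Finset β}
    {f : β → α} (hf : Function.Injective f) (h : s.Nonempty) {a : β} (ha : a ∈ s)
    (hmax : ∀ x ∈ s, f x ≤ f a) :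
    Classical.choose (s.exists_max_image f h) = a :=
  have spec := Classical.choose_spec (s.exists_max_image f h)
  hf (le_antisymm (hmax _ spec.1) (spec.2 a ha))

theorem Finset.fold_max_eq_of_mem_of_forall_le {β α : Type*} [LinearOrder α] {s : Finset β}
    {f : β → α} {b : α} {a : β} (ha : a ∈ s) (hmax : ∀ x ∈ s, f x ≤ f a)
    (hb : b ≤ f a) :
    s.fold max b f = f a :=
  le_antisymm ((fold_max_le _).2 ⟨hb, hmax⟩) ((le_fold_max _).2 (Or.inr ⟨a, ha, le_rfl⟩))

noncomputable def cbaamSortedPrefix {S : ℕ} (c : Fin S → ℝ) (σ : Equiv.Perm (Fin S))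
    (κ : ℕ) :
    (Fin S → Option (Fin S)) × (Fin S → ℝ) :=
  (fun j => if (j : ℕ) < κ then some (σ j) else none,
   fun j => if (j : ℕ) < κ then c (σ j) else 0)

section SortedPrefix

variable {S : ℕ} {c : Fin S → ℝ} {σ : Equiv.Perm (Fin S)} {κ : ℕ}

theorem cbaamSortedPrefix_zero : cbaamSortedPrefix c σ 0 = (fun _ => none, fun _ => 0) := by
  simp [cbaamSortedPrefix]

theorem cbaamSortedPrefix_fst_ne_some_iff (i : Fin S) :
    (∀ l, (cbaamSortedPrefix c σ κ).1 l ≠ some i) ↔ κ ≤ (σ.symm i : ℕ) := by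
  constructor
  · intro h
    by_contra! hlt
    exact h (σ.symm i) (by simp [cbaamSortedPrefix, hlt])
  · intro h l hl
    by_cases hl' : (l : ℕ) < κ
    · simp only [cbaamSortedPrefix, if_pos hl', Option.some.injEq] at hl
      subst hl
      simp at h
      omega
    · simp [cbaamSortedPrefix, hl'] at hl

theorem cbaamProposers_cbaamSortedPrefix (hpos : ∀ i, 0 < c i) (hanti : StrictAnti (c ∘ σ))
    (j : Fin S) :
    cbaamProposers c (cbaamSortedPrefix c σ κ).1 (cbaamSortedPrefix c σ κ).2 j =
      if (j : ℕ) = κ then univ.filter (fun i => κ ≤ (σ.symm i : ℕ)) else ∅ := by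
  have beaten : ∀ (i l : Fin S), κ ≤ (σ.symm i : ℕ) → (l : ℕ) < κ → c i < c (σ l) :=
    fun i l hi hl => by
      simpa using hanti (show l < σ.symm i from Fin.lt_def.mpr (by omega))
  ext i
  simp only [cbaamProposers, mem_filter, mem_univ, true_and, cbaamSortedPrefix_fst_ne_some_iff]
  split_ifs with hj
  · simp only [mem_filter, mem_univ, true_and, and_iff_left_iff_imp]
    intro hi
    refine ⟨by simp [cbaamSortedPrefix, hj, hpos i], fun l hl => ?_⟩
    have hlκ : (l : ℕ) < κ := hj ▸ Fin.lt_def.mp hl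
    simpa [cbaamSortedPrefix, hlκ] using (beaten i l hi hlκ).le
  · simp only [notMem_empty, iff_false, not_and, not_forall, not_not]
    intro hi hbid
    rcases lt_or_gt_of_ne hj with hjκ | hκj
    · simp only [cbaamSortedPrefix, if_pos hjκ] at hbid
      exact absurd (beaten i j hi hjκ) hbid.not_gt
    · exact ⟨⟨κ, hκj.trans j.isLt⟩, Fin.lt_def.mpr hκj,
        by simp [cbaamSortedPrefix, hpos i]⟩

theorem cbaamStep_cbaamSortedPrefix (hpos : ∀ i, 0 < c i) (hinj : Function.Injective c)
    (hanti : StrictAnti (c ∘ σ)) (hκ : κ < S) :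
    cbaamStep c (cbaamSortedPrefix c σ κ) = cbaamSortedPrefix c σ (κ + 1) := by
  set k : Fin S := ⟨κ, hκ⟩
  set R := univ.filter (fun i => κ ≤ (σ.symm i : ℕ))
  have hk : σ k ∈ R := by simp [R, k]
  have hmax : ∀ i ∈ R, c i ≤ c (σ k) := fun i hi => by
    simpa using hanti.antitone (show k ≤ σ.symm i from Fin.le_def.mpr (mem_filter.mp hi).2)
  set P := cbaamProposers c (cbaamSortedPrefix c σ κ).1 (cbaamSortedPrefix c σ κ).2 with hPdef
  have hP := cbaamProposers_cbaamSortedPrefix (κ := κ) hpos hanti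
  have hPk : P k = R := (hP k).trans (if_pos rfl)
  have hne : ∀ {j}, j ≠ k → (j : ℕ) ≠ κ := fun hjk h => hjk (Fin.ext h)
  have hPj : ∀ j ≠ k, P j = ∅ := fun j hjk => (hP j).trans (if_neg (hne hjk))
  have hlt : ∀ j ≠ k, (j : ℕ) < κ + 1 ↔ (j : ℕ) < κ := fun j hjk => by
    have := hne hjk; omega
  refine Prod.ext (funext fun j => ?_) (funext fun j => ?_) <;> by_cases hjk : j = k
  · subst hjk
    have hPne : (P k).Nonempty := hPk ▸ ⟨_, hk⟩
    simp only [cbaamStep, ← hPdef]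
    rw [dif_pos hPne, choose_exists_max_image_eq hinj hPne (hPk ▸ hk) (hPk ▸ hmax)]
    simp [cbaamSortedPrefix, k]
  · simp only [cbaamStep, ← hPdef, hPj j hjk, Finset.not_nonempty_empty, dite_false]
    simp only [cbaamSortedPrefix, hlt j hjk]
  · subst hjk
    simp only [cbaamStep, ← hPdef]
    rw [hPk, fold_max_eq_of_mem_of_forall_le hk hmax (by simp [cbaamSortedPrefix, k, (hpos _).le])]
    simp [cbaamSortedPrefix, k]
  · simp only [cbaamStep, ← hPdef, hPj j hjk, fold_empty]
    simp only [cbaamSortedPrefix, hlt j hjk]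

theorem cbaam_eq_cbaamSortedPrefix (hpos : ∀ i, 0 < c i) (hinj : Function.Injective c)
    (hanti : StrictAnti (c ∘ σ)) : ∀ κ ≤ S, cbaam c κ = cbaamSortedPrefix c σ κ
  | 0, _ => cbaamSortedPrefix_zero.symm
  | κ + 1, hκ => by
    rw [cbaam, Function.iterate_succ_apply', ← cbaam,
      cbaam_eq_cbaamSortedPrefix hpos hinj hanti κ (Nat.le_of_succ_le hκ),
      cbaamStep_cbaamSortedPrefix hpos hinj hanti hκ]

end SortedPrefix

theorem cbaam_converges_in_S_iterations_general
    (S : ℕ) (c : Fin S → ℝ)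
    (hpos : ∀ i, 0 < c i) (hdist : Function.Injective c) :
    ∃ σ : Equiv.Perm (Fin S),
      StrictAnti (c ∘ σ) ∧
      (∀ j, (cbaam c S).2 j = c (σ j)) ∧
      (∀ j, (cbaam c S).1 j = some (σ j)) := by
  obtain ⟨σ, hanti⟩ := hdist.exists_perm_strictAnti_comp
  have hfinal := cbaam_eq_cbaamSortedPrefix hpos hdist hanti S le_rfl
  exact ⟨σ, hanti, fun j => by simp [hfinal, cbaamSortedPrefix],
    fun j => by simp [hfinal, cbaamSortedPrefix]⟩

/-- With `S > 1` agents holding pairwise distinct positive bids,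
CBAA-M over a fully connected graph converges in exactly `S` iterations:
`w^S` lists the bids in strictly decreasing order and `v^S` the corresponding
agent indices. -/
theorem cbaam_converges_in_S_iterations
    (S : ℕ) (hS : 1 < S) (c : Fin S → ℝ)
    (hpos : ∀ i, 0 < c i) (hdist : Function.Injective c) :
    ∃ σ : Equiv.Perm (Fin S),
      StrictAnti (c ∘ σ) ∧
      (∀ j, (cbaam c S).2 j = c (σ j)) ∧
      (∀ j, (cbaam c S).1 j = some (σ j)) :=
  cbaam_converges_in_S_iterations_general S c hpos hdist
end

section
/- Consider S > 1 agents with pairwise distinct positive bids c : Fin S → ℝ running the CBAA-M algorithm over a fully connected communication graph, with shared state (v^κ, w^κ) updated as follows from v^0 = w^0 = 0: at iteration κ, each agent i whose index does not yet appear in v^{κ-1} proposes itself at the least position j such that c i > w^{κ-1}_j; then, for every position j, w^κ_j is set to the maximum of w^{κ-1}_j and all bids c i proposed at position j, and v^κ_j to the index of the corresponding maximizing agent. Then for every iteration 0 ≤ κ ≤ S, the first κ entries of w^κ are exactly the κ largest bids arranged in strictly decreasing order (with v^κ holding the corresponding agent indices), and the remaining S − κ entries of w^κ are 0. -/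
open Finset

/-!
Induction on `κ`. If after `κ` iterations the first `κ` positions hold the `κ` largest bids in
decreasing order and the rest are `0`, then every unlisted agent is beaten at every position
`< κ` and beats the `0` at position `κ`, so all unlisted agents (and only they) propose at
position `κ`, and nobody proposes elsewhere. Position `κ` then receives the largest unlisted
bid, which is the `(κ + 1)`-st largest bid overall; since bids are distinct, the winner is
unique and so is independent of how the maximizer is chosen.
-/

section Step

variable {S : ℕ} {c : Fin S → ℝ} {s : (Fin S → Option (Fin S)) × (Fin S → ℝ)}

lemma mem_cbaamProposers {v : Fin S → Option (Fin S)} {w : Fin S → ℝ} {j i : Fin S} :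
    i ∈ cbaamProposers c v w j ↔
      (∀ l, v l ≠ some i) ∧ w j < c i ∧ ∀ l, l < j → ¬ w l < c i := by
  classical
  simp [cbaamProposers]

lemma cbaamStep_apply_of_eq_empty {p : Fin S} (hp : cbaamProposers c s.1 s.2 p = ∅) :
    (cbaamStep c s).1 p = s.1 p ∧ (cbaamStep c s).2 p = s.2 p := by
  simp [cbaamStep, hp]

lemma cbaamStep_apply_of_isMax (hc : Function.Injective c) {p i : Fin S}
    (hi : i ∈ cbaamProposers c s.1 s.2 p) (hmax : ∀ x ∈ cbaamProposers c s.1 s.2 p, c x ≤ c i) :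
    (cbaamStep c s).1 p = some i ∧ (cbaamStep c s).2 p = c i := by
  have hne : (cbaamProposers c s.1 s.2 p).Nonempty := ⟨i, hi⟩
  obtain ⟨hmem, hmax'⟩ :=
    Classical.choose_spec ((cbaamProposers c s.1 s.2 p).exists_max_image c hne)
  refine ⟨?_, ?_⟩
  · simp only [cbaamStep, dif_pos hne]
    exact congrArg some (hc ((hmax _ hmem).antisymm (hmax' i hi)))
  · refine le_antisymm ((Finset.fold_max_le _).mpr ⟨(mem_cbaamProposers.mp hi).2.1.le, hmax⟩) ?_
    exact (Finset.le_fold_max _).mpr (Or.inr ⟨i, hi, le_rfl⟩)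

end Step

lemma exists_forall_ne_of_lt_card {S κ : ℕ} {α : Type*} [Fintype α] (f : Fin S → α)
    (hκ : κ < Fintype.card α) : ∃ i : α, ∀ j : Fin S, (j : ℕ) < κ → f j ≠ i := by
  classical
  set listed := (univ.filter fun j : Fin S => (j : ℕ) < κ).image f
  have hcard : listed.card < (univ : Finset α).card :=
    calc listed.card ≤ (univ.filter fun j : Fin S => (j : ℕ) < κ).card := card_image_le
      _ ≤ κ := by simp [Fin.card_filter_val_lt]
      _ < _ := hκ
  obtain ⟨i, -, hi⟩ := exists_mem_notMem_of_card_lt_card hcard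
  exact ⟨i, fun j hj hfj => hi (mem_image.mpr ⟨j, by simpa using hj, hfj⟩)⟩

structure CbaamInvariant {S : ℕ} (c : Fin S → ℝ) (κ : ℕ)
    (s : (Fin S → Option (Fin S)) × (Fin S → ℝ)) (f : Fin S → Fin S) : Prop where
  prefix_eq : ∀ j : Fin S, (j : ℕ) < κ → s.2 j = c (f j) ∧ s.1 j = some (f j)
  prefix_strictAnti : ∀ j l : Fin S, (j : ℕ) < κ → (l : ℕ) < κ → j < l → c (f l) < c (f j)
  lt_prefix_of_unlisted : ∀ i : Fin S, (∀ j : Fin S, (j : ℕ) < κ → f j ≠ i) →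
    ∀ j : Fin S, (j : ℕ) < κ → c i < c (f j)
  suffix_eq : ∀ j : Fin S, κ ≤ (j : ℕ) → s.2 j = 0 ∧ s.1 j = none

namespace CbaamInvariant

variable {S : ℕ} {c : Fin S → ℝ} {κ : ℕ} {s : (Fin S → Option (Fin S)) × (Fin S → ℝ)}
  {f : Fin S → Fin S}

lemma unassigned_iff (h : CbaamInvariant c κ s f) (i : Fin S) :
    (∀ l, s.1 l ≠ some i) ↔ ∀ j : Fin S, (j : ℕ) < κ → f j ≠ i := by
  refine ⟨fun hi j hj hfj => hi j (by rw [(h.prefix_eq j hj).2, hfj]), fun hi l => ?_⟩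
  rcases lt_or_ge (l : ℕ) κ with hl | hl
  · rw [(h.prefix_eq l hl).2, Ne, Option.some_inj]
    exact hi l hl
  · simp [(h.suffix_eq l hl).2]

lemma mem_cbaamProposers_iff (h : CbaamInvariant c κ s f) (hpos : ∀ i, 0 < c i) (hκ : κ < S)
    (i : Fin S) :
    i ∈ cbaamProposers c s.1 s.2 ⟨κ, hκ⟩ ↔ ∀ j : Fin S, (j : ℕ) < κ → f j ≠ i := by
  rw [mem_cbaamProposers, h.unassigned_iff, (h.suffix_eq ⟨κ, hκ⟩ le_rfl).1]
  refine ⟨fun hi => hi.1, fun hi => ⟨hi, hpos i, fun l hl => ?_⟩⟩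
  rw [(h.prefix_eq l hl).1, not_lt]
  exact (h.lt_prefix_of_unlisted i hi l hl).le

lemma cbaamProposers_eq_empty (h : CbaamInvariant c κ s f) (hpos : ∀ i, 0 < c i) (hκ : κ < S)
    {p : Fin S} (hp : p ≠ ⟨κ, hκ⟩) : cbaamProposers c s.1 s.2 p = ∅ := by
  refine Finset.eq_empty_of_forall_notMem fun i hi => ?_
  obtain ⟨hun, hbeat, hleast⟩ := mem_cbaamProposers.mp hi
  rcases lt_trichotomy (p : ℕ) κ with hpκ | hpκ | hpκ
  · rw [(h.prefix_eq p hpκ).1] at hbeat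
    exact hbeat.not_gt (h.lt_prefix_of_unlisted i ((h.unassigned_iff i).mp hun) p hpκ)
  · exact hp (Fin.ext hpκ)
  · refine hleast ⟨κ, hκ⟩ hpκ ?_
    rw [(h.suffix_eq ⟨κ, hκ⟩ le_rfl).1]
    exact hpos i

lemma succ (h : CbaamInvariant c κ s f) (hpos : ∀ i, 0 < c i) (hc : Function.Injective c)
    (hκ : κ < S) : ∃ f', CbaamInvariant c (κ + 1) (cbaamStep c s) f' := by
  set jκ : Fin S := ⟨κ, hκ⟩
  have hmem := h.mem_cbaamProposers_iff hpos hκ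
  obtain ⟨i₀, hi₀⟩ := exists_forall_ne_of_lt_card f (by simpa using hκ)
  obtain ⟨winner, hwin, hwin_max⟩ :=
    (cbaamProposers c s.1 s.2 jκ).exists_max_image c ⟨i₀, (hmem i₀).mpr hi₀⟩
  obtain ⟨hv_new, hw_new⟩ := cbaamStep_apply_of_isMax hc hwin hwin_max
  have hold : ∀ p : Fin S, (p : ℕ) ≠ κ →
      (cbaamStep c s).1 p = s.1 p ∧ (cbaamStep c s).2 p = s.2 p :=
    fun p hp => cbaamStep_apply_of_eq_empty
      (h.cbaamProposers_eq_empty hpos hκ fun he => hp (congrArg Fin.val he))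
  refine ⟨fun j => if (j : ℕ) < κ then f j else winner, ⟨?_, ?_, ?_, ?_⟩⟩
  · intro j hj
    by_cases hjκ : (j : ℕ) < κ
    · rw [if_pos hjκ, (hold j hjκ.ne).1, (hold j hjκ.ne).2]
      exact h.prefix_eq j hjκ
    · obtain rfl : j = jκ := Fin.ext (by simp only [jκ]; omega)
      rw [if_neg hjκ, hv_new, hw_new]
      exact ⟨rfl, rfl⟩
  · intro j l hj hl hjl
    have hjκ : (j : ℕ) < κ := by have := Fin.lt_def.mp hjl; omega
    by_cases hlκ : (l : ℕ) < κ
    · simp only [if_pos hlκ, if_pos hjκ]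
      exact h.prefix_strictAnti j l hjκ hlκ hjl
    · simp only [if_neg hlκ, if_pos hjκ]
      exact h.lt_prefix_of_unlisted winner ((hmem winner).mp hwin) j hjκ
  · intro i hi j hj
    have hi_unlisted : ∀ j : Fin S, (j : ℕ) < κ → f j ≠ i := fun j hj => by
      simpa only [if_pos hj] using hi j (by omega)
    have hwin_ne : winner ≠ i := by simpa [jκ] using hi jκ (by simp [jκ])
    by_cases hjκ : (j : ℕ) < κ
    · simp only [if_pos hjκ]
      exact h.lt_prefix_of_unlisted i hi_unlisted j hjκ
    · simp only [if_neg hjκ]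
      exact (hwin_max i ((hmem i).mpr hi_unlisted)).lt_of_ne fun he => hwin_ne (hc he).symm
  · intro j hj
    rw [(hold j (by omega)).1, (hold j (by omega)).2]
    exact h.suffix_eq j (by omega)

end CbaamInvariant

lemma cbaam_succ {S : ℕ} (c : Fin S → ℝ) (κ : ℕ) : cbaam c (κ + 1) = cbaamStep c (cbaam c κ) :=
  Function.iterate_succ_apply' _ _ _

lemma exists_cbaamInvariant {S : ℕ} {c : Fin S → ℝ} (hpos : ∀ i, 0 < c i)
    (hc : Function.Injective c) : ∀ κ ≤ S, ∃ f, CbaamInvariant c κ (cbaam c κ) f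
  | 0, _ => ⟨id, ⟨nofun, nofun, nofun, fun _ _ => ⟨rfl, rfl⟩⟩⟩
  | κ + 1, hκ => by
    obtain ⟨f, hf⟩ := exists_cbaamInvariant hpos hc κ (by omega)
    rw [cbaam_succ]
    exact hf.succ hpos hc hκ

theorem cbaam_invariant_each_iteration_general
    (S : ℕ) (c : Fin S → ℝ)
    (hpos : ∀ i, 0 < c i) (hdist : Function.Injective c) :
    ∀ κ : ℕ, κ ≤ S →
      ∃ f : Fin S → Fin S,
        -- the first κ entries record agents `f j` with their bids
        (∀ j : Fin S, (j : ℕ) < κ →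
          (cbaam c κ).2 j = c (f j) ∧ (cbaam c κ).1 j = some (f j)) ∧
        -- these bids are arranged in strictly decreasing order
        (∀ j l : Fin S, (j : ℕ) < κ → (l : ℕ) < κ → j < l → c (f l) < c (f j)) ∧
        -- they are exactly the κ largest bids: any agent not listed among the
        -- first κ winners bids strictly less than each of them
        (∀ i : Fin S, (∀ j : Fin S, (j : ℕ) < κ → f j ≠ i) →
          ∀ j : Fin S, (j : ℕ) < κ → c i < c (f j)) ∧
        -- the remaining S − κ entries of w^κ are 0
        (∀ j : Fin S, κ ≤ (j : ℕ) → (cbaam c κ).2 j = 0) := by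
  intro κ hκ
  obtain ⟨f, hf⟩ := exists_cbaamInvariant hpos hdist κ hκ
  exact ⟨f, hf.prefix_eq, hf.prefix_strictAnti, hf.lt_prefix_of_unlisted,
    fun j hj => (hf.suffix_eq j hj).1⟩

/-- With `S > 1` agents holding pairwise distinct positive bids,
after every iteration `κ ≤ S` of CBAA-M the first `κ` entries of `w^κ` are
exactly the `κ` largest bids in strictly decreasing order, `v^κ` holds the
corresponding agent indices in its first `κ` entries, and the remaining
`S − κ` entries of `w^κ` are `0`. -/
theorem cbaam_invariant_each_iteration
    (S : ℕ) (hS : 1 < S) (c : Fin S → ℝ)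
    (hpos : ∀ i, 0 < c i) (hdist : Function.Injective c) :
    ∀ κ : ℕ, κ ≤ S →
      ∃ f : Fin S → Fin S,
        -- the first κ entries record agents `f j` with their bids
        (∀ j : Fin S, (j : ℕ) < κ →
          (cbaam c κ).2 j = c (f j) ∧ (cbaam c κ).1 j = some (f j)) ∧
        -- these bids are arranged in strictly decreasing order
        (∀ j l : Fin S, (j : ℕ) < κ → (l : ℕ) < κ → j < l → c (f l) < c (f j)) ∧
        -- they are exactly the κ largest bids: any agent not listed among the
        -- first κ winners bids strictly less than each of them
        (∀ i : Fin S, (∀ j : Fin S, (j : ℕ) < κ → f j ≠ i) →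
          ∀ j : Fin S, (j : ℕ) < κ → c i < c (f j)) ∧
        -- the remaining S − κ entries of w^κ are 0
        (∀ j : Fin S, κ ≤ (j : ℕ) → (cbaam c κ).2 j = 0) :=
  cbaam_invariant_each_iteration_general S c hpos hdist
end
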